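/- Let G be a finite group with d(G) ≥ 2 that is 2-flexible. Then G is 1-flexible if and only if Cyc(G) = 1. -/

import Mathlib

/-!
If `c ≠ 1` lies in the cycliciser, `1`-flexibility extends `c` by `d(G) - 1` elements `yᵢ` to
a generating set. Each `⟨c, yᵢ⟩` is cyclic, say `⟨zᵢ⟩`, and `c` lies in every `⟨zᵢ⟩`, so the
`d(G) - 1` elements `zᵢ` already generate `G`: a contradiction. Conversely, if the
cycliciser is trivial, every `c ≠ 1` has a partner `g` with `⟨c, g⟩` non-cyclic, hence
`2`-generated but not `1`-generated, and `2`-flexibility extends `(c, g)`.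
-/

noncomputable def dG (G : Type*) [Group G] : ℕ :=
  sInf {n | ∃ s : Finset G, s.card = n ∧ Subgroup.closure (s : Set G) = ⊤}

def Flexible (G : Type*) [Group G] (k : ℕ) : Prop :=
  ∀ x : Fin k → G, dG ↥(Subgroup.closure (Set.range x)) = k →
    ∃ y : Fin (dG G - k) → G, Subgroup.closure (Set.range x ∪ Set.range y) = ⊤

open Subgroup Group

lemma dG_le_card {G : Type*} [Group G] {s : Finset G} (hs : closure (s : Set G) = ⊤) :
    dG G ≤ s.card :=
  Nat.sInf_le ⟨s, rfl, hs⟩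

lemma dG_eq_rank (G : Type*) [Group G] [FG G] : dG G = rank G := by
  obtain ⟨s, hs, hgen⟩ := rank_spec G
  refine le_antisymm (hs ▸ dG_le_card hgen) ?_
  obtain ⟨t, ht, htgen⟩ := Nat.sInf_mem (s := {n | ∃ s : Finset G, s.card = n ∧
    closure (s : Set G) = ⊤}) ⟨_, s, rfl, hgen⟩
  exact (rank_le htgen).trans_eq ht

lemma Group.rank_le_one_iff_isCyclic {G : Type*} [Group G] [FG G] :
    rank G ≤ 1 ↔ IsCyclic G := by
  constructor
  · intro h
    obtain ⟨s, hs, hgen⟩ := rank_spec G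
    obtain ⟨g, hg⟩ := Finset.card_le_one_iff_subset_singleton.mp (hs.trans_le h)
    refine isCyclic_iff_exists_zpowers_eq_top.mpr ⟨g, top_unique ?_⟩
    rw [← hgen, zpowers_eq_closure]
    exact closure_mono (Finset.coe_singleton g ▸ Finset.coe_subset.mpr hg)
  · intro _
    obtain ⟨g, hg⟩ := IsCyclic.exists_generator (α := G)
    have hgen : closure (({g} : Finset G) : Set G) = ⊤ := by
      rw [Finset.coe_singleton, ← zpowers_eq_closure, eq_top_iff]
      exact fun x _ => hg x
    simpa using rank_le hgen

lemma Subgroup.rank_closure_singleton_eq_one_iff {G : Type*} [Group G] {c : G} :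
    rank (closure ({c} : Set G)) = 1 ↔ c ≠ 1 := by
  have hle : rank (closure ({c} : Set G)) ≤ 1 := by
    simpa using rank_closure_finite_le_nat_card ({c} : Set G)
  rw [ne_eq, ← zpowers_eq_bot, zpowers_eq_closure, ← Ne, ← nontrivial_iff_ne_bot,
    ← not_subsingleton_iff_nontrivial, ← Group.rank_eq_zero_iff]
  omega

lemma Subgroup.rank_closure_pair_le_two {G : Type*} [Group G] (a b : G) :
    rank (closure ({a, b} : Set G)) ≤ 2 := by
  refine (rank_closure_finite_le_nat_card _).trans ?_
  rw [Nat.card_coe_set_eq]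
  exact (Set.ncard_insert_le a {b}).trans (by rw [Set.ncard_singleton])

lemma dG_closure_singleton_eq_one_iff {G : Type*} [Group G] {c : G} :
    dG (closure ({c} : Set G)) = 1 ↔ c ≠ 1 := by
  rw [dG_eq_rank, rank_closure_singleton_eq_one_iff]

lemma flexible_one_iff {G : Type*} [Group G] :
    Flexible G 1 ↔
      ∀ c : G, c ≠ 1 → ∃ y : Fin (dG G - 1) → G, closure (insert c (Set.range y)) = ⊤ := by
  refine ⟨fun h c hc => ?_, fun h x hx => ?_⟩
  · obtain ⟨y, hy⟩ := h (fun _ => c) (by rwa [Set.range_const, dG_closure_singleton_eq_one_iff])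
    exact ⟨y, by rwa [Set.range_const, Set.singleton_union] at hy⟩
  · rw [Set.range_unique, dG_closure_singleton_eq_one_iff] at hx
    obtain ⟨y, hy⟩ := h _ hx
    exact ⟨y, by rwa [Set.range_unique, Set.singleton_union]⟩

lemma Flexible.exists_closure_insert_eq_top {G : Type*} [Group G] (h2 : Flexible G 2)
    (hd : 2 ≤ dG G) {a b : G} (hab : ¬IsCyclic (closure ({a, b} : Set G))) :
    ∃ y : Fin (dG G - 1) → G, closure (insert a (Set.range y)) = ⊤ := by
  have hrange : Set.range ![a, b] = {a, b} := by
    rw [Matrix.range_cons, Matrix.range_cons, Matrix.range_empty, Set.union_empty]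
    rfl
  have hpair : dG (closure (Set.range ![a, b])) = 2 := by
    have hlt := not_le.mp (rank_le_one_iff_isCyclic.not.mpr hab)
    rw [hrange, dG_eq_rank]
    exact le_antisymm (rank_closure_pair_le_two a b) hlt
  obtain ⟨y, hy⟩ := h2 ![a, b] hpair
  have hlen : dG G - 1 = dG G - 2 + 1 := by omega
  refine ⟨Fin.cons b y ∘ finCongr hlen, ?_⟩
  rw [(finCongr hlen).surjective.range_comp, Fin.range_cons, ← hy, hrange, Set.insert_union,
    Set.singleton_union]

lemma dG_le_of_closure_insert_eq_top {G : Type*} [Group G] {c : G} {k : ℕ} (hk : 0 < k)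
    (y : Fin k → G) (hcyc : ∀ i, IsCyclic (closure ({c, y i} : Set G)))
    (hgen : closure (insert c (Set.range y)) = ⊤) : dG G ≤ k := by
  classical
  choose z hz using fun i => (Subgroup.isCyclic_iff_exists_zpowers_eq_top _).mp (hcyc i)
  have hle : ∀ i, closure ({c, y i} : Set G) ≤ closure (Set.range z) := fun i =>
    hz i ▸ zpowers_le.mpr (subset_closure (Set.mem_range_self i))
  have htop : closure ((Finset.univ.image z : Finset G) : Set G) = ⊤ := by
    rw [Finset.coe_image, Finset.coe_univ, Set.image_univ, eq_top_iff, ← hgen, closure_le]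
    rintro g (rfl | ⟨i, rfl⟩)
    · exact hle ⟨0, hk⟩ (subset_closure (by simp))
    · exact hle i (subset_closure (by simp))
  calc dG G ≤ _ := dG_le_card htop
    _ ≤ k := Finset.card_image_le.trans_eq (by simp)

theorem one_flexible_iff_cycliciser_trivial_general (G : Type*) [Group G]
    (hd : 2 ≤ dG G) (h2 : Flexible G 2)
    (N : Subgroup G)
    (hN : ∀ c : G, c ∈ N ↔ ∀ g : G, IsCyclic ↥(Subgroup.closure {c, g})) :
    Flexible G 1 ↔ N = ⊥ := by
  rw [flexible_one_iff]
  constructor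
  · intro h1
    refine (eq_bot_iff_forall N).mpr fun c hc => by_contra fun hc1 => ?_
    obtain ⟨y, hy⟩ := h1 c hc1
    have := dG_le_of_closure_insert_eq_top (by omega) y (fun i => (hN c).mp hc (y i)) hy
    omega
  · intro hbot c hc1
    have hcN : c ∉ N := by rwa [hbot, mem_bot]
    obtain ⟨g, hg⟩ := not_forall.mp (mt (hN c).mpr hcN)
    exact h2.exists_closure_insert_eq_top hd hg

theorem one_flexible_iff_cycliciser_trivial (G : Type*) [Group G] [Finite G]
    (hd : 2 ≤ dG G) (h2 : Flexible G 2)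
    (N : Subgroup G) [N.Normal]
    (hN : ∀ c : G, c ∈ N ↔ ∀ g : G, IsCyclic ↥(Subgroup.closure {c, g})) :
    Flexible G 1 ↔ N = ⊥ :=
  one_flexible_iff_cycliciser_trivial_general G hd h2 N hN
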